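/- arXiv:2203.07464 — 2 statements merged into one kernel-verified Lean document; each statement's English description precedes it below -/
import Mathlib

section
/- Assume N/4 < s < 1 and the ground state of (-Δ)^s Q + Q = Q^p is unique up to translation. Then the positive ground state solution U of (a + b‖(-Δ)^{s/2}U‖₂²)(-Δ)^s U + m U = U^p is unique up to translation. -/
/-!
Set `E = a + b‖(-Δ)^{s/2}U‖²`. A positive solution `U` of the Kirchhoff equation solves
`E (-Δ)^s U + m U = U^p`, so its rescaling `Ũ(x) = m^{-1/(p-1)} U((E/m)^{1/(2s)} x)` is a positive
solution of `(-Δ)^s Q + Q = Q^p`. For two solutions `U₁, U₂`, uniqueness of `Q` makes `Ũ₂` a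
translate of `Ũ₁`, so both have the same `‖(-Δ)^{s/2}·‖²`. By scaling this quantity equals
`C · E^μ (E - a)` with `μ = 1 - N/(2s)` and `C` independent of `U`; as `N < 4s` gives `μ > -1`,
`e ↦ e^μ (e - a)` is strictly increasing on `[a, ∞)`, so `E₁ = E₂`. The two rescalings then use
the same dilation, and undoing it turns the translation of `Ũ₁` into one of `U₁`.
-/

open MeasureTheory Real Metric
open scoped FourierTransform RealInnerProductSpace

/-- The fractional Laplacian, defined via the Fourier multiplier. -/
noncomputable def fLap (N : ℕ) (s : ℝ) (u : EuclideanSpace ℝ (Fin N) → ℝ) :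
    EuclideanSpace ℝ (Fin N) → ℝ :=
  fun x => (𝓕⁻ (fun ξ => ((‖ξ‖ ^ (2 * s) : ℝ) : ℂ) * 𝓕 (fun y => (u y : ℂ)) ξ) x).re

/-- The squared L2-norm of the s/2-fractional gradient. -/
noncomputable def gNorm (N : ℕ) (s : ℝ) (u : EuclideanSpace ℝ (Fin N) → ℝ) : ℝ :=
  ∫ x, (fLap N (s / 2) u x) ^ 2

namespace Real

variable {V E : Type*} [NormedAddCommGroup V] [InnerProductSpace ℝ V] [FiniteDimensional ℝ V]
  [MeasurableSpace V] [BorelSpace V] [NormedAddCommGroup E] [NormedSpace ℂ E]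

lemma fourier_const_smul (r : ℂ) (f : V → E) (w : V) :
    𝓕 (fun v => r • f v) w = r • 𝓕 f w :=
  congrFun (VectorFourier.fourierIntegral_const_smul _ _ _ f r) w

lemma fourierInv_const_smul (r : ℂ) (f : V → E) (w : V) :
    𝓕⁻ (fun v => r • f v) w = r • 𝓕⁻ f w :=
  congrFun (VectorFourier.fourierIntegral_const_smul _ _ _ f r) w

lemma fourier_comp_sub_right (f : V → E) (t w : V) :
    𝓕 (fun v => f (v - t)) w = 𝐞 (-⟪t, w⟫) • 𝓕 f w := by
  have h := congrFun (VectorFourier.fourierIntegral_comp_add_right 𝐞 volume (innerₗ V) f (-t)) w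
  simp only [Function.comp_def, ← sub_eq_add_neg, map_neg, LinearMap.neg_apply,
    innerₗ_apply_apply] at h
  exact h

lemma fourierInv_fourierChar_smul (g : V → E) (t x : V) :
    𝓕⁻ (fun w => 𝐞 (-⟪t, w⟫) • g w) x = 𝓕⁻ g (x - t) := by
  simp only [fourierInv_eq, smul_smul, ← AddChar.map_add_eq_mul, inner_sub_right,
    real_inner_comm t, ← sub_eq_add_neg]

lemma fourier_comp_smul (f : V → E) {c : ℝ} (hc : 0 < c) (w : V) :
    𝓕 (fun v => f (c • v)) w = (c ^ Module.finrank ℝ V)⁻¹ • 𝓕 f (c⁻¹ • w) := by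
  have hinner (v : V) : ⟪c • v, c⁻¹ • w⟫ = ⟪v, w⟫ := by
    rw [real_inner_smul_left, real_inner_smul_right, mul_inv_cancel_left₀ hc.ne']
  simp only [fourier_eq, ← Measure.integral_comp_smul_of_nonneg volume _ c (hR := hc.le),
    hinner]

lemma fourierInv_comp_inv_smul (g : V → E) {c : ℝ} (hc : 0 < c) (x : V) :
    𝓕⁻ (fun w => g (c⁻¹ • w)) x = c ^ Module.finrank ℝ V • 𝓕⁻ g (c • x) := by
  have hinner (w : V) : ⟪c⁻¹ • w, c • x⟫ = ⟪w, x⟫ := by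
    rw [real_inner_smul_left, real_inner_smul_right, inv_mul_cancel_left₀ hc.ne']
  simp only [fourierInv_eq, ← Measure.integral_comp_inv_smul_of_nonneg volume _ hc.le, hinner]

end Real

lemma strictMonoOn_rpow_mul_sub {a μ : ℝ} (ha : 0 < a) (hμ : -1 < μ) :
    StrictMonoOn (fun e : ℝ => e ^ μ * (e - a)) (Set.Ici a) := by
  intro e (hae : a ≤ e) e' _ hee'
  have he : 0 < e := ha.trans_le hae
  have he' : 0 < e' := he.trans hee'
  rcases le_or_gt μ 0 with hμ0 | hμ0
  · have hexpand {x : ℝ} (hx : 0 < x) : x ^ μ * (x - a) = x ^ (μ + 1) - a * x ^ μ := by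
      rw [Real.rpow_add_one hx.ne']
      ring
    have hgrow : e ^ (μ + 1) < e' ^ (μ + 1) := Real.rpow_lt_rpow he.le hee' (by linarith)
    have hdecay : e' ^ μ ≤ e ^ μ := Real.rpow_le_rpow_of_nonpos he hee'.le hμ0
    simp only [hexpand he, hexpand he']
    nlinarith
  · exact mul_lt_mul'' (Real.rpow_lt_rpow he.le hee' hμ0) (by linarith)
      (Real.rpow_nonneg he.le μ) (sub_nonneg.2 hae)

section

variable {N : ℕ}

local notation "𝔼" => EuclideanSpace ℝ (Fin N)

lemma fLap_comp_sub_right (σ : ℝ) (u : 𝔼 → ℝ) (t x : 𝔼) :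
    fLap N σ (fun y => u (y - t)) x = fLap N σ u (x - t) := by
  simp only [fLap, fourier_comp_sub_right (fun y => (u y : ℂ)) t, mul_smul_comm,
    fourierInv_fourierChar_smul]

lemma fLap_const_mul (σ c : ℝ) (u : 𝔼 → ℝ) (x : 𝔼) :
    fLap N σ (fun y => c * u y) x = c * fLap N σ u x := by
  have hF (ξ : 𝔼) : ((‖ξ‖ ^ (2 * σ) : ℝ) : ℂ) * 𝓕 (fun y => ((c * u y : ℝ) : ℂ)) ξ
      = (c : ℂ) • (((‖ξ‖ ^ (2 * σ) : ℝ) : ℂ) * 𝓕 (fun y => (u y : ℂ)) ξ) := by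
    simp only [Complex.ofReal_mul, ← smul_eq_mul (a := (c : ℂ)), fourier_const_smul]
    exact mul_smul_comm _ _ _
  simp only [fLap]
  rw [funext hF, fourierInv_const_smul, smul_eq_mul, Complex.re_ofReal_mul]

lemma fLap_comp_smul (σ : ℝ) {l : ℝ} (hl : 0 < l) (u : 𝔼 → ℝ) (x : 𝔼) :
    fLap N σ (fun y => u (l • y)) x = l ^ (2 * σ) * fLap N σ u (l • x) := by
  set G : 𝔼 → ℂ := fun ξ => ((‖ξ‖ ^ (2 * σ) : ℝ) : ℂ) * 𝓕 (fun y => (u y : ℂ)) ξ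
  have hF (ξ : 𝔼) : ((‖ξ‖ ^ (2 * σ) : ℝ) : ℂ) * 𝓕 (fun y => (u (l • y) : ℂ)) ξ
      = (((l ^ N)⁻¹ * l ^ (2 * σ) : ℝ) : ℂ) • G (l⁻¹ • ξ) := by
    have hnorm : ‖ξ‖ ^ (2 * σ) = l ^ (2 * σ) * ‖l⁻¹ • ξ‖ ^ (2 * σ) := by
      rw [norm_smul, Real.norm_of_nonneg (inv_nonneg.2 hl.le),
        Real.mul_rpow (inv_nonneg.2 hl.le) (norm_nonneg ξ), Real.inv_rpow hl.le,
        mul_inv_cancel_left₀ (Real.rpow_pos_of_pos hl _).ne']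
    rw [fourier_comp_smul (fun y => (u y : ℂ)) hl, finrank_euclideanSpace_fin, hnorm]
    simp only [G, Complex.real_smul, smul_eq_mul]
    push_cast
    ring
  simp only [fLap]
  rw [funext hF, fourierInv_const_smul, fourierInv_comp_inv_smul G hl, finrank_euclideanSpace_fin]
  simp only [G, Complex.real_smul, smul_eq_mul]
  rw [← mul_assoc, ← Complex.ofReal_mul, Complex.re_ofReal_mul]
  field_simp

lemma gNorm_nonneg (s : ℝ) (u : 𝔼 → ℝ) : 0 ≤ gNorm N s u :=
  integral_nonneg fun _ => sq_nonneg _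

lemma le_add_mul_gNorm {a b s : ℝ} (hb : 0 ≤ b) (u : 𝔼 → ℝ) : a ≤ a + b * gNorm N s u :=
  le_add_of_nonneg_right (mul_nonneg hb (gNorm_nonneg s u))

lemma gNorm_comp_sub_right (s : ℝ) (u : 𝔼 → ℝ) (t : 𝔼) :
    gNorm N s (fun y => u (y - t)) = gNorm N s u := by
  simp only [gNorm, fLap_comp_sub_right]
  exact integral_sub_right_eq_self (fun x => fLap N (s / 2) u x ^ 2) t

lemma gNorm_const_mul (s c : ℝ) (u : 𝔼 → ℝ) :
    gNorm N s (fun y => c * u y) = c ^ 2 * gNorm N s u := by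
  simp only [gNorm, fLap_const_mul, mul_pow, integral_const_mul]

lemma gNorm_comp_smul (s : ℝ) {l : ℝ} (hl : 0 < l) (u : 𝔼 → ℝ) :
    gNorm N s (fun y => u (l • y)) = l ^ (2 * s) * (l ^ N)⁻¹ * gNorm N s u := by
  have hpow : (l ^ (2 * (s / 2))) ^ 2 = l ^ (2 * s) := by
    rw [← Real.rpow_mul_natCast hl.le]
    ring_nf
  simp only [gNorm, fLap_comp_smul _ hl, mul_pow, hpow, integral_const_mul,
    Measure.integral_comp_smul_of_nonneg volume (fun x => fLap N (s / 2) u x ^ 2) l (hR := hl.le),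
    finrank_euclideanSpace_fin, smul_eq_mul, mul_assoc]

noncomputable def kirchhoffRescale (s m p E : ℝ) (U : 𝔼 → ℝ) : 𝔼 → ℝ :=
  fun x => m ^ (-(1 / (p - 1))) * U ((E / m) ^ (1 / (2 * s)) • x)

variable {s m p E : ℝ}

lemma kirchhoffRescale_pos (hm : 0 < m) {U : 𝔼 → ℝ} (hU : ∀ x, 0 < U x) (x : 𝔼) :
    0 < kirchhoffRescale s m p E U x :=
  mul_pos (Real.rpow_pos_of_pos hm _) (hU _)

lemma MeasureTheory.Integrable.kirchhoffRescale (hm : 0 < m) (hE : 0 < E) {U : 𝔼 → ℝ}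
    (hU : Integrable U) :
    Integrable (kirchhoffRescale s m p E U) :=
  (hU.comp_smul (Real.rpow_pos_of_pos (div_pos hE hm) _).ne').const_mul _

lemma fLap_kirchhoffRescale_add_eq_rpow (hs : 0 < s) (hm : 0 < m) (hp : 1 < p) (hE : 0 < E)
    {U : 𝔼 → ℝ} (hU : ∀ x, 0 ≤ U x) (heq : ∀ x, E * fLap N s U x + m * U x = U x ^ p) (x : 𝔼) :
    fLap N s (kirchhoffRescale s m p E U) x + kirchhoffRescale s m p E U x
      = kirchhoffRescale s m p E U x ^ p := by
  have hEm : 0 < E / m := div_pos hE hm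
  have hl_rpow : ((E / m) ^ (1 / (2 * s))) ^ (2 * s) = E / m := by
    rw [← Real.rpow_mul hEm.le, one_div_mul_cancel (by positivity), Real.rpow_one]
  have hc_rpow : (m ^ (-(1 / (p - 1)))) ^ p = m ^ (-(1 / (p - 1))) / m := by
    rw [← Real.rpow_mul hm.le, ← Real.rpow_sub_one hm.ne']
    congr 1
    field_simp [(sub_pos.2 hp).ne']
    ring
  unfold kirchhoffRescale
  rw [fLap_const_mul, fLap_comp_smul s (Real.rpow_pos_of_pos hEm _),
    Real.mul_rpow (Real.rpow_pos_of_pos hm _).le (hU _), hc_rpow, hl_rpow, ← heq]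
  field_simp

lemma gNorm_kirchhoffRescale (hs : 0 < s) (hm : 0 < m) (hE : 0 < E) (U : 𝔼 → ℝ) :
    gNorm N s (kirchhoffRescale s m p E U)
      = (m ^ (-(1 / (p - 1)))) ^ 2 * (E / m) ^ (1 - N / (2 * s)) * gNorm N s U := by
  have hEm : 0 < E / m := div_pos hE hm
  have hscale : ((E / m) ^ (1 / (2 * s))) ^ (2 * s) * (((E / m) ^ (1 / (2 * s))) ^ N)⁻¹
      = (E / m) ^ (1 - N / (2 * s)) := by
    rw [← Real.rpow_natCast, ← Real.rpow_mul hEm.le, ← Real.rpow_mul hEm.le,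
      ← Real.rpow_neg hEm.le, ← Real.rpow_add hEm]
    congr 1
    field_simp
    ring
  unfold kirchhoffRescale
  rw [gNorm_const_mul, gNorm_comp_smul s (Real.rpow_pos_of_pos hEm _), hscale, mul_assoc]

lemma comp_sub_of_kirchhoffRescale_comp_sub (hm : 0 < m) (hE : 0 < E) {U₁ U₂ : 𝔼 → ℝ} {y : 𝔼}
    (h : ∀ x, kirchhoffRescale s m p E U₂ x = kirchhoffRescale s m p E U₁ (x - y)) (x : 𝔼) :
    U₂ x = U₁ (x - (E / m) ^ (1 / (2 * s)) • y) := by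
  have hl : (E / m) ^ (1 / (2 * s)) ≠ 0 := (Real.rpow_pos_of_pos (div_pos hE hm) _).ne'
  have hx := h (((E / m) ^ (1 / (2 * s)))⁻¹ • x)
  simp only [kirchhoffRescale, smul_sub, smul_inv_smul₀ hl] at hx
  exact mul_left_cancel₀ (Real.rpow_pos_of_pos hm _).ne' hx

lemma kirchhoff_energy_eq_of_gNorm_kirchhoffRescale_eq {a b : ℝ} (hs : (N : ℝ) / 4 < s)
    (ha : 0 < a) (hb : 0 < b) (hm : 0 < m) {U₁ U₂ : 𝔼 → ℝ}
    (h : gNorm N s (kirchhoffRescale s m p (a + b * gNorm N s U₁) U₁)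
      = gNorm N s (kirchhoffRescale s m p (a + b * gNorm N s U₂) U₂)) :
    a + b * gNorm N s U₁ = a + b * gNorm N s U₂ := by
  have hs0 : 0 < s := (by positivity : (0 : ℝ) ≤ N / 4).trans_lt hs
  set μ : ℝ := 1 - N / (2 * s) with hμ_def
  have hμ : -1 < μ := by
    have : (N : ℝ) / (2 * s) < 2 := by rw [div_lt_iff₀ (by positivity)]; linarith
    linarith
  have hE_ge (U : 𝔼 → ℝ) : a ≤ a + b * gNorm N s U := le_add_mul_gNorm hb.le U
  have hgNorm (U : 𝔼 → ℝ) : gNorm N s (kirchhoffRescale s m p (a + b * gNorm N s U) U)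
      = (m ^ (-(1 / (p - 1)))) ^ 2 / (m ^ μ * b)
        * ((a + b * gNorm N s U) ^ μ * (a + b * gNorm N s U - a)) := by
    have hE : 0 < a + b * gNorm N s U := ha.trans_le (hE_ge U)
    rw [gNorm_kirchhoffRescale hs0 hm hE, ← hμ_def, Real.div_rpow hE.le hm.le,
      add_sub_cancel_left]
    field_simp
  rw [hgNorm, hgNorm] at h
  exact (strictMonoOn_rpow_mul_sub ha hμ).injOn (hE_ge U₁) (hE_ge U₂)
    (mul_left_cancel₀ (by positivity) h)

end

theorem kirchhoff_unique_up_to_translation_general (N : ℕ) (s a b m p : ℝ)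
    (hs1 : (N : ℝ) / 4 < s) (ha : 0 < a) (hb : 0 < b) (hm : 0 < m)
    (hp1 : 1 < p)
    (huniq : ∀ Q₁ Q₂ : EuclideanSpace ℝ (Fin N) → ℝ,
      Integrable Q₁ → Integrable Q₂ → (∀ x, 0 < Q₁ x) → (∀ x, 0 < Q₂ x) →
      (∀ x, fLap N s Q₁ x + Q₁ x = Q₁ x ^ p) →
      (∀ x, fLap N s Q₂ x + Q₂ x = Q₂ x ^ p) →
      ∃ y, ∀ x, Q₂ x = Q₁ (x - y))
    (U₁ U₂ : EuclideanSpace ℝ (Fin N) → ℝ)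
    (h₁int : Integrable U₁) (h₂int : Integrable U₂)
    (h₁pos : ∀ x, 0 < U₁ x) (h₂pos : ∀ x, 0 < U₂ x)
    (h₁ : ∀ x, (a + b * gNorm N s U₁) * fLap N s U₁ x + m * U₁ x = U₁ x ^ p)
    (h₂ : ∀ x, (a + b * gNorm N s U₂) * fLap N s U₂ x + m * U₂ x = U₂ x ^ p) :
    ∃ y, ∀ x, U₂ x = U₁ (x - y) := by
  have hs : 0 < s := (by positivity : (0 : ℝ) ≤ N / 4).trans_lt hs1
  have hE₁ : 0 < a + b * gNorm N s U₁ := ha.trans_le (le_add_mul_gNorm hb.le U₁)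
  have hE₂ : 0 < a + b * gNorm N s U₂ := ha.trans_le (le_add_mul_gNorm hb.le U₂)
  obtain ⟨y, hy⟩ := huniq _ _ (h₁int.kirchhoffRescale hm hE₁) (h₂int.kirchhoffRescale hm hE₂)
    (kirchhoffRescale_pos hm h₁pos) (kirchhoffRescale_pos hm h₂pos)
    (fLap_kirchhoffRescale_add_eq_rpow hs hm hp1 hE₁ (fun x => (h₁pos x).le) h₁)
    (fLap_kirchhoffRescale_add_eq_rpow hs hm hp1 hE₂ (fun x => (h₂pos x).le) h₂)
  have hE : a + b * gNorm N s U₁ = a + b * gNorm N s U₂ :=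
    kirchhoff_energy_eq_of_gNorm_kirchhoffRescale_eq hs1 ha hb hm
      (by rw [funext hy, gNorm_comp_sub_right])
  rw [← hE] at hy
  exact ⟨_, comp_sub_of_kirchhoffRescale_comp_sub hm hE₁ hy⟩

theorem kirchhoff_unique_up_to_translation (N : ℕ) (s a b m p : ℝ) (hN : 1 ≤ N)
    (hs1 : (N : ℝ) / 4 < s) (hs2 : s < 1) (ha : 0 < a) (hb : 0 < b) (hm : 0 < m)
    (hp1 : 1 < p) (hp2 : p < 2 * N / ((N : ℝ) - 2 * s) - 1)
    (huniq : ∀ Q₁ Q₂ : EuclideanSpace ℝ (Fin N) → ℝ,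
      Integrable Q₁ → Integrable Q₂ → (∀ x, 0 < Q₁ x) → (∀ x, 0 < Q₂ x) →
      (∀ x, fLap N s Q₁ x + Q₁ x = Q₁ x ^ p) →
      (∀ x, fLap N s Q₂ x + Q₂ x = Q₂ x ^ p) →
      ∃ y, ∀ x, Q₂ x = Q₁ (x - y))
    (U₁ U₂ : EuclideanSpace ℝ (Fin N) → ℝ)
    (h₁int : Integrable U₁) (h₂int : Integrable U₂)
    (h₁pos : ∀ x, 0 < U₁ x) (h₂pos : ∀ x, 0 < U₂ x)
    (h₁ : ∀ x, (a + b * gNorm N s U₁) * fLap N s U₁ x + m * U₁ x = U₁ x ^ p)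
    (h₂ : ∀ x, (a + b * gNorm N s U₂) * fLap N s U₂ x + m * U₂ x = U₂ x ^ p) :
    ∃ y, ∀ x, U₂ x = U₁ (x - y) :=
  kirchhoff_unique_up_to_translation_general N s a b m p hs1 ha hb hm hp1 huniq U₁ U₂ h₁int h₂int
    h₁pos h₂pos h₁ h₂
end

section
/- Let U : ℝ^N → ℝ satisfy 0 ≤ U(x) ≤ C/(1+|x|^{N+2s}) with C > 0, 0 < s < 1, and let V : ℝ^N → ℝ be bounded and α-Hölder continuous on a ball B_{r₀}(y) with 0 < α < (N+4s)/2. Then there exists C' > 0 such that for all sufficiently small ε > 0, ∫_{ℝ^N} |V(εz + y) - V(y)| U(z)² dz ≤ C' ε^α. -/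
open MeasureTheory Metric

/-- Hölder estimate `∫ |V(εz+y)-V(y)| U(z)² dz ≤ C' ε^α`. -/
theorem holder_potential_estimate (N : ℕ) (s α C r₀ L M : ℝ) (hN : 1 ≤ N)
    (hs0 : 0 < s) (hs1 : s < 1) (hC : 0 < C) (hr : 0 < r₀)
    (hα0 : 0 < α) (hα : α < ((N : ℝ) + 4 * s) / 2)
    (U V : EuclideanSpace ℝ (Fin N) → ℝ) (y : EuclideanSpace ℝ (Fin N))
    (hU0 : ∀ x, 0 ≤ U x)
    (hUd : ∀ x, U x ≤ C / (1 + ‖x‖ ^ ((N : ℝ) + 2 * s)))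
    (hVb : ∀ x, |V x| ≤ M)
    (hHol : ∀ x ∈ closedBall y r₀, ∀ x' ∈ closedBall y r₀,
      |V x - V x'| ≤ L * ‖x - x'‖ ^ α) :
    ∃ C' > 0, ∃ ε₀ > 0, ∀ ε : ℝ, 0 < ε → ε < ε₀ →
      ∫ z, |V (ε • z + y) - V y| * U z ^ 2 ≤ C' * ε ^ α := by
  have hN1 : (1 : ℝ) ≤ (N : ℝ) := by exact_mod_cast hN
  set p : ℝ := (N : ℝ) + 2 * s with hp
  have hp0 : 0 < p := by simp only [hp]; linarith
  have hαp : α < 2 * p - (N : ℝ) := by simp only [hp]; linarith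
  have hM0 : 0 ≤ M := le_trans (abs_nonneg _) (hVb y)
  set K : ℝ := |L| + 2 * M / r₀ ^ α with hK
  have hK0 : 0 ≤ K := by
    have : 0 ≤ 2 * M / r₀ ^ α := div_nonneg (by linarith) (Real.rpow_nonneg hr.le α)
    simp only [hK]; linarith [abs_nonneg L]
  set h : EuclideanSpace ℝ (Fin N) → ℝ := fun z => ‖z‖ ^ α * ((1 + ‖z‖ ^ p) ^ 2)⁻¹ with hh
  -- elementary inequality: (1+t)^p ≤ 2^p (1+t^p)
  have lem2 : ∀ t : ℝ, 0 ≤ t → (1 + t) ^ p ≤ 2 ^ p * (1 + t ^ p) := by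
    intro t ht
    rcases le_or_gt t 1 with htt | htt
    · calc (1 + t) ^ p ≤ 2 ^ p := Real.rpow_le_rpow (by linarith) (by linarith) hp0.le
        _ ≤ 2 ^ p * (1 + t ^ p) := by
            have h1 : (0:ℝ) ≤ t ^ p := Real.rpow_nonneg ht p
            nlinarith [Real.rpow_nonneg (by norm_num : (0:ℝ) ≤ 2) p]
    · calc (1 + t) ^ p ≤ (2 * t) ^ p := Real.rpow_le_rpow (by linarith) (by linarith) hp0.le
        _ = 2 ^ p * t ^ p := Real.mul_rpow (by norm_num) ht
        _ ≤ 2 ^ p * (1 + t ^ p) := by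
            have h1 : (0:ℝ) ≤ (2:ℝ) ^ p := Real.rpow_nonneg (by norm_num) p
            nlinarith
  -- pointwise majorization of h by the japanese bracket
  have key2 : ∀ z : EuclideanSpace ℝ (Fin N),
      h z ≤ 4 ^ p * (1 + ‖z‖) ^ (-(2 * p - α)) := by
    intro z
    set t : ℝ := ‖z‖ with htdef
    have ht : 0 ≤ t := norm_nonneg z
    have h1t : (0:ℝ) < 1 + t := by linarith
    have hA : (0:ℝ) < (1 + t ^ p) ^ 2 := by positivity
    have hB : (0:ℝ) < (1 + t) ^ (2 * p - α) := Real.rpow_pos_of_pos h1t _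
    simp only [hh]
    rw [Real.rpow_neg h1t.le, ← div_eq_mul_inv, ← div_eq_mul_inv,
      div_le_div_iff₀ hA hB]
    calc t ^ α * (1 + t) ^ (2 * p - α)
        ≤ (1 + t) ^ α * (1 + t) ^ (2 * p - α) := by
          exact mul_le_mul_of_nonneg_right (Real.rpow_le_rpow ht (by linarith) hα0.le)
            hB.le
      _ = (1 + t) ^ p * (1 + t) ^ p := by
          rw [← Real.rpow_add h1t, ← Real.rpow_add h1t]; congr 1; ring
      _ ≤ (2 ^ p * (1 + t ^ p)) * (2 ^ p * (1 + t ^ p)) := by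
          have := lem2 t ht
          exact mul_le_mul this this (Real.rpow_pos_of_pos h1t p).le (by positivity)
      _ = 4 ^ p * (1 + t ^ p) ^ 2 := by
          rw [show (4:ℝ) = 2 * 2 by norm_num, Real.mul_rpow (by norm_num) (by norm_num)]
          ring
  -- integrability of h
  have hnr : ((Module.finrank ℝ (EuclideanSpace ℝ (Fin N))) : ℝ) < 2 * p - α := by
    rw [finrank_euclideanSpace_fin]; linarith
  have hcont : Continuous h := by
    apply Continuous.mul
    · exact continuous_norm.rpow_const (fun z => Or.inr hα0.le)
    · apply Continuous.inv₀
      · exact (continuous_const.add (continuous_norm.rpow_const (fun z => Or.inr hp0.le))).pow 2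
      · intro z
        have : (0:ℝ) ≤ ‖z‖ ^ p := Real.rpow_nonneg (norm_nonneg z) p
        positivity
  have hint : Integrable h := by
    refine ((integrable_one_add_norm hnr).const_mul ((4:ℝ) ^ p)).mono'
      hcont.aestronglyMeasurable (ae_of_all _ fun z => ?_)
    have h0 : 0 ≤ h z := by
      simp only [hh]
      have : (0:ℝ) ≤ ‖z‖ ^ p := Real.rpow_nonneg (norm_nonneg z) p
      positivity
    rw [Real.norm_of_nonneg h0]
    exact key2 z
  set I : ℝ := ∫ z, h z with hIdef
  have hI0 : 0 ≤ I := by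
    apply integral_nonneg
    intro z
    simp only [hh]
    have : (0:ℝ) ≤ ‖z‖ ^ p := Real.rpow_nonneg (norm_nonneg z) p
    positivity
  have hKCI : 0 ≤ K * C ^ 2 * I := mul_nonneg (mul_nonneg hK0 (sq_nonneg C)) hI0
  refine ⟨K * C ^ 2 * I + 1, by linarith, 1, one_pos, fun ε hε hε1 => ?_⟩
  have hεα0 : (0:ℝ) ≤ ε ^ α := Real.rpow_nonneg hε.le α
  -- pointwise Hölder-type bound, valid everywhere
  have hA : ∀ z : EuclideanSpace ℝ (Fin N),
      |V (ε • z + y) - V y| ≤ K * (ε ^ α * ‖z‖ ^ α) := by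
    intro z
    have hnz : ‖ε • z‖ = ε * ‖z‖ := by
      rw [norm_smul, Real.norm_of_nonneg hε.le]
    have hεα : ε ^ α * ‖z‖ ^ α = (ε * ‖z‖) ^ α :=
      (Real.mul_rpow hε.le (norm_nonneg z)).symm
    have hprod0 : (0:ℝ) ≤ ε ^ α * ‖z‖ ^ α :=
      mul_nonneg hεα0 (Real.rpow_nonneg (norm_nonneg z) α)
    by_cases hz : ε * ‖z‖ ≤ r₀
    · have hmem : ε • z + y ∈ closedBall y r₀ := by
        rw [mem_closedBall, dist_eq_norm, add_sub_cancel_right, hnz]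
        exact hz
      have h2 := hHol _ hmem y (mem_closedBall_self hr.le)
      rw [add_sub_cancel_right, hnz] at h2
      calc |V (ε • z + y) - V y| ≤ L * (ε * ‖z‖) ^ α := h2
        _ ≤ |L| * (ε * ‖z‖) ^ α :=
            mul_le_mul_of_nonneg_right (le_abs_self L)
              (Real.rpow_nonneg (by positivity) α)
        _ ≤ K * (ε ^ α * ‖z‖ ^ α) := by
            rw [hεα]
            refine mul_le_mul_of_nonneg_right ?_ (Real.rpow_nonneg (by positivity) α)
            have : 0 ≤ 2 * M / r₀ ^ α := div_nonneg (by linarith) (Real.rpow_nonneg hr.le α)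
            simp only [hK]; linarith
    · push_neg at hz
      have h2 : |V (ε • z + y) - V y| ≤ 2 * M := by
        have t1 := abs_add_le (V (ε • z + y)) (-(V y))
        rw [abs_neg] at t1
        have t2 := hVb (ε • z + y)
        have t3 := hVb y
        calc |V (ε • z + y) - V y| = |V (ε • z + y) + -(V y)| := by rw [sub_eq_add_neg]
          _ ≤ |V (ε • z + y)| + |V y| := t1
          _ ≤ 2 * M := by linarith
      have h3 : (1:ℝ) ≤ (ε * ‖z‖ / r₀) ^ α :=
        Real.one_le_rpow ((one_le_div hr).mpr hz.le) hα0.le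
      have h4 : (ε * ‖z‖ / r₀) ^ α = (ε ^ α * ‖z‖ ^ α) / r₀ ^ α := by
        rw [Real.div_rpow (by positivity) hr.le, hεα]
      calc |V (ε • z + y) - V y| ≤ 2 * M := h2
        _ ≤ 2 * M * ((ε * ‖z‖ / r₀) ^ α) := le_mul_of_one_le_right (by linarith) h3
        _ = (2 * M / r₀ ^ α) * (ε ^ α * ‖z‖ ^ α) := by rw [h4]; ring
        _ ≤ K * (ε ^ α * ‖z‖ ^ α) := by
            refine mul_le_mul_of_nonneg_right ?_ hprod0
            simp only [hK]; linarith [abs_nonneg L]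
  -- full pointwise bound
  have hB : ∀ z : EuclideanSpace ℝ (Fin N),
      |V (ε • z + y) - V y| * U z ^ 2 ≤ (K * C ^ 2 * ε ^ α) * h z := by
    intro z
    have hden : (0:ℝ) < 1 + ‖z‖ ^ p := by
      have : (0:ℝ) ≤ ‖z‖ ^ p := Real.rpow_nonneg (norm_nonneg z) p
      linarith
    have hU2 : U z ^ 2 ≤ C ^ 2 * ((1 + ‖z‖ ^ p) ^ 2)⁻¹ := by
      calc U z ^ 2 ≤ (C / (1 + ‖z‖ ^ p)) ^ 2 := pow_le_pow_left₀ (hU0 z) (hUd z) 2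
        _ = C ^ 2 * ((1 + ‖z‖ ^ p) ^ 2)⁻¹ := by rw [div_pow, div_eq_mul_inv]
    have hprod0 : (0:ℝ) ≤ K * (ε ^ α * ‖z‖ ^ α) :=
      mul_nonneg hK0 (mul_nonneg hεα0 (Real.rpow_nonneg (norm_nonneg z) α))
    calc |V (ε • z + y) - V y| * U z ^ 2
        ≤ (K * (ε ^ α * ‖z‖ ^ α)) * (C ^ 2 * ((1 + ‖z‖ ^ p) ^ 2)⁻¹) :=
          mul_le_mul (hA z) hU2 (by positivity) hprod0
      _ = (K * C ^ 2 * ε ^ α) * h z := by simp only [hh]; ring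
  calc ∫ z, |V (ε • z + y) - V y| * U z ^ 2
      ≤ ∫ z, (K * C ^ 2 * ε ^ α) * h z :=
        integral_mono_of_nonneg (ae_of_all _ fun z => by positivity)
          (hint.const_mul _) (ae_of_all _ hB)
    _ = (K * C ^ 2 * ε ^ α) * I := integral_const_mul _ _
    _ ≤ (K * C ^ 2 * I + 1) * ε ^ α := by nlinarith
end
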